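/- Every deduction in BPR with premises (Γ;Δ) and conclusion φ can be reduced to a deduction in pre-normal form with the same premises and the same conclusion. -/
import Mathlib


/-- Atomic propositions; the set `At` includes the units `⊥` and `⊤`. -/
inductive Atom : Type where
  | bot : Atom
  | top : Atom
  | prop : ℕ → Atom
deriving DecidableEq

/-- Formulas over `At`, built with `∧`, `∨`, `→` and co-implication `↤`. -/
inductive Formula : Type where
  | atom : Atom → Formula
  | conj : Formula → Formula → Formula
  | disj : Formula → Formula → Formula
  | impl : Formula → Formula → Formula
  | coimpl : Formula → Formula → Formula
deriving DecidableEq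

abbrev Formula.bot : Formula := .atom .bot
abbrev Formula.top : Formula := .atom .top

/-- A formula is atomic iff it is a member of `At` (including `⊥` and `⊤`). -/
def Formula.isAtomic : Formula → Prop
  | .atom _ => True
  | _ => False

/-- Polarity of a statement: proof (`pos`) or refutation (`neg`). -/
inductive Side : Type where
  | pos : Side
  | neg : Side
deriving DecidableEq
/-- Natural deduction derivations of the bilateral system `BPR`.
`Deriv Γ Δ s φ` is a deduction of `φ` as a proof (`s = pos`) or refutation
(`s = neg`) from proof assumptions among `Γ` and refutation assumptions
(counterassumptions) among `Δ`. -/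
inductive Deriv : Set Formula → Set Formula → Side → Formula → Type where
  | hypP {Γ Δ : Set Formula} {φ : Formula} (h : φ ∈ Γ) : Deriv Γ Δ .pos φ
  | hypN {Γ Δ : Set Formula} {φ : Formula} (h : φ ∈ Δ) : Deriv Γ Δ .neg φ
  -- ⊤(+) and ⊥(−) axioms
  | topP {Γ Δ} : Deriv Γ Δ .pos Formula.top
  | botN {Γ Δ} : Deriv Γ Δ .neg Formula.bot
  -- implication
  | impI {Γ Δ φ ψ} : Deriv (insert φ Γ) Δ .pos ψ → Deriv Γ Δ .pos (.impl φ ψ)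
  | impE {Γ Δ φ ψ} : Deriv Γ Δ .pos (.impl φ ψ) → Deriv Γ Δ .pos φ → Deriv Γ Δ .pos ψ
  | impIN {Γ Δ φ ψ} : Deriv Γ Δ .pos φ → Deriv Γ Δ .neg ψ → Deriv Γ Δ .neg (.impl φ ψ)
  | impE1N {Γ Δ φ ψ} : Deriv Γ Δ .neg (.impl φ ψ) → Deriv Γ Δ .pos φ
  | impE2N {Γ Δ φ ψ} : Deriv Γ Δ .neg (.impl φ ψ) → Deriv Γ Δ .neg ψ
  -- conjunction
  | andI {Γ Δ φ ψ} : Deriv Γ Δ .pos φ → Deriv Γ Δ .pos ψ → Deriv Γ Δ .pos (.conj φ ψ)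
  | andE1 {Γ Δ φ ψ} : Deriv Γ Δ .pos (.conj φ ψ) → Deriv Γ Δ .pos φ
  | andE2 {Γ Δ φ ψ} : Deriv Γ Δ .pos (.conj φ ψ) → Deriv Γ Δ .pos ψ
  | andI1N {Γ Δ φ ψ} : Deriv Γ Δ .neg φ → Deriv Γ Δ .neg (.conj φ ψ)
  | andI2N {Γ Δ φ ψ} : Deriv Γ Δ .neg ψ → Deriv Γ Δ .neg (.conj φ ψ)
  | andEN {Γ Δ φ ψ s χ} : Deriv Γ Δ .neg (.conj φ ψ) →
      Deriv Γ (insert φ Δ) s χ → Deriv Γ (insert ψ Δ) s χ → Deriv Γ Δ s χ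
  -- disjunction
  | orI1 {Γ Δ φ ψ} : Deriv Γ Δ .pos φ → Deriv Γ Δ .pos (.disj φ ψ)
  | orI2 {Γ Δ φ ψ} : Deriv Γ Δ .pos ψ → Deriv Γ Δ .pos (.disj φ ψ)
  | orE {Γ Δ φ ψ s χ} : Deriv Γ Δ .pos (.disj φ ψ) →
      Deriv (insert φ Γ) Δ s χ → Deriv (insert ψ Γ) Δ s χ → Deriv Γ Δ s χ
  | orIN {Γ Δ φ ψ} : Deriv Γ Δ .neg φ → Deriv Γ Δ .neg ψ → Deriv Γ Δ .neg (.disj φ ψ)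
  | orE1N {Γ Δ φ ψ} : Deriv Γ Δ .neg (.disj φ ψ) → Deriv Γ Δ .neg φ
  | orE2N {Γ Δ φ ψ} : Deriv Γ Δ .neg (.disj φ ψ) → Deriv Γ Δ .neg ψ
  -- co-implication
  | coimpI {Γ Δ φ ψ} : Deriv Γ Δ .pos φ → Deriv Γ Δ .neg ψ → Deriv Γ Δ .pos (.coimpl φ ψ)
  | coimpE1 {Γ Δ φ ψ} : Deriv Γ Δ .pos (.coimpl φ ψ) → Deriv Γ Δ .pos φ
  | coimpE2 {Γ Δ φ ψ} : Deriv Γ Δ .pos (.coimpl φ ψ) → Deriv Γ Δ .neg ψ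
  | coimpIN {Γ Δ φ ψ} : Deriv Γ (insert ψ Δ) .neg φ → Deriv Γ Δ .neg (.coimpl φ ψ)
  | coimpEN {Γ Δ φ ψ} : Deriv Γ Δ .neg (.coimpl φ ψ) → Deriv Γ Δ .neg ψ → Deriv Γ Δ .neg φ
  -- ⊥(+) and ⊤(−): from a proof of ⊥ / refutation of ⊤, conclude any formula on either side
  | botP {Γ Δ s φ} : Deriv Γ Δ .pos Formula.bot → Deriv Γ Δ s φ
  | topN {Γ Δ s φ} : Deriv Γ Δ .neg Formula.top → Deriv Γ Δ s φ
  -- coordination rules PR(+) and PR(−)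
  | prP {Γ Δ φ ψ} : Deriv Γ Δ .pos φ → Deriv Γ Δ .neg φ → Deriv Γ Δ .pos ψ
  | prN {Γ Δ φ ψ} : Deriv Γ Δ .pos φ → Deriv Γ Δ .neg φ → Deriv Γ Δ .neg ψ

/-- The deduction ends with an application of one of the rules
`⊥(+)`, `⊤(−)`, `PR(+)`, `PR(−)`. -/
def Deriv.endsSpecial : ∀ {Γ Δ : Set Formula} {s : Side} {φ : Formula}, Deriv Γ Δ s φ → Prop
  | _, _, _, _, .botP _ => True
  | _, _, _, _, .topN _ => True
  | _, _, _, _, .prP _ _ => True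
  | _, _, _, _, .prN _ _ => True
  | _, _, _, _, _ => False

/-- Every application of `PR(+)`, `PR(−)`, `⊥(+)`, `⊤(−)` in the deduction has
atomic premises and an atomic conclusion. -/
def Deriv.specialAtomic : ∀ {Γ Δ : Set Formula} {s : Side} {φ : Formula}, Deriv Γ Δ s φ → Prop
  | _, _, _, _, .hypP _ => True
  | _, _, _, _, .hypN _ => True
  | _, _, _, _, .topP => True
  | _, _, _, _, .botN => True
  | _, _, _, _, .impI d => d.specialAtomic
  | _, _, _, _, .impE d e => d.specialAtomic ∧ e.specialAtomic
  | _, _, _, _, .impIN d e => d.specialAtomic ∧ e.specialAtomic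
  | _, _, _, _, .impE1N d => d.specialAtomic
  | _, _, _, _, .impE2N d => d.specialAtomic
  | _, _, _, _, .andI d e => d.specialAtomic ∧ e.specialAtomic
  | _, _, _, _, .andE1 d => d.specialAtomic
  | _, _, _, _, .andE2 d => d.specialAtomic
  | _, _, _, _, .andI1N d => d.specialAtomic
  | _, _, _, _, .andI2N d => d.specialAtomic
  | _, _, _, _, .andEN d e f => d.specialAtomic ∧ e.specialAtomic ∧ f.specialAtomic
  | _, _, _, _, .orI1 d => d.specialAtomic
  | _, _, _, _, .orI2 d => d.specialAtomic
  | _, _, _, _, .orE d e f => d.specialAtomic ∧ e.specialAtomic ∧ f.specialAtomic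
  | _, _, _, _, .orIN d e => d.specialAtomic ∧ e.specialAtomic
  | _, _, _, _, .orE1N d => d.specialAtomic
  | _, _, _, _, .orE2N d => d.specialAtomic
  | _, _, _, _, .coimpI d e => d.specialAtomic ∧ e.specialAtomic
  | _, _, _, _, .coimpE1 d => d.specialAtomic
  | _, _, _, _, .coimpE2 d => d.specialAtomic
  | _, _, _, _, .coimpIN d => d.specialAtomic
  | _, _, _, _, .coimpEN d e => d.specialAtomic ∧ e.specialAtomic
  | _, _, _, φ, .botP d => φ.isAtomic ∧ d.specialAtomic
  | _, _, _, φ, .topN d => φ.isAtomic ∧ d.specialAtomic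
  | _, _, _, ψ, .prP (φ := χ) d e => χ.isAtomic ∧ ψ.isAtomic ∧ d.specialAtomic ∧ e.specialAtomic
  | _, _, _, ψ, .prN (φ := χ) d e => χ.isAtomic ∧ ψ.isAtomic ∧ d.specialAtomic ∧ e.specialAtomic

/-- No formula occurrence in the deduction is simultaneously the conclusion of an
application of one of `⊥(+)`, `⊤(−)`, `PR(+)`, `PR(−)` and the premise of an
application of one of these rules. -/
def Deriv.noSpecialChain : ∀ {Γ Δ : Set Formula} {s : Side} {φ : Formula}, Deriv Γ Δ s φ → Prop
  | _, _, _, _, .hypP _ => True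
  | _, _, _, _, .hypN _ => True
  | _, _, _, _, .topP => True
  | _, _, _, _, .botN => True
  | _, _, _, _, .impI d => d.noSpecialChain
  | _, _, _, _, .impE d e => d.noSpecialChain ∧ e.noSpecialChain
  | _, _, _, _, .impIN d e => d.noSpecialChain ∧ e.noSpecialChain
  | _, _, _, _, .impE1N d => d.noSpecialChain
  | _, _, _, _, .impE2N d => d.noSpecialChain
  | _, _, _, _, .andI d e => d.noSpecialChain ∧ e.noSpecialChain
  | _, _, _, _, .andE1 d => d.noSpecialChain
  | _, _, _, _, .andE2 d => d.noSpecialChain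
  | _, _, _, _, .andI1N d => d.noSpecialChain
  | _, _, _, _, .andI2N d => d.noSpecialChain
  | _, _, _, _, .andEN d e f => d.noSpecialChain ∧ e.noSpecialChain ∧ f.noSpecialChain
  | _, _, _, _, .orI1 d => d.noSpecialChain
  | _, _, _, _, .orI2 d => d.noSpecialChain
  | _, _, _, _, .orE d e f => d.noSpecialChain ∧ e.noSpecialChain ∧ f.noSpecialChain
  | _, _, _, _, .orIN d e => d.noSpecialChain ∧ e.noSpecialChain
  | _, _, _, _, .orE1N d => d.noSpecialChain
  | _, _, _, _, .orE2N d => d.noSpecialChain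
  | _, _, _, _, .coimpI d e => d.noSpecialChain ∧ e.noSpecialChain
  | _, _, _, _, .coimpE1 d => d.noSpecialChain
  | _, _, _, _, .coimpE2 d => d.noSpecialChain
  | _, _, _, _, .coimpIN d => d.noSpecialChain
  | _, _, _, _, .coimpEN d e => d.noSpecialChain ∧ e.noSpecialChain
  | _, _, _, _, .botP d => ¬ d.endsSpecial ∧ d.noSpecialChain
  | _, _, _, _, .topN d => ¬ d.endsSpecial ∧ d.noSpecialChain
  | _, _, _, _, .prP d e => ¬ d.endsSpecial ∧ ¬ e.endsSpecial ∧ d.noSpecialChain ∧ e.noSpecialChain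
  | _, _, _, _, .prN d e => ¬ d.endsSpecial ∧ ¬ e.endsSpecial ∧ d.noSpecialChain ∧ e.noSpecialChain

/-- A deduction is in pre-normal form: all premises and conclusions of applications of
`⊥(+)`, `⊤(−)`, `PR(+)` and `PR(−)` have degree 0 (are atomic), and no formula
occurrence is both the premise of an application of one of these four rules and the
conclusion of an application of one of these four rules. -/
def Deriv.preNormal {Γ Δ : Set Formula} {s : Side} {φ : Formula} (D : Deriv Γ Δ s φ) :
    Prop :=
  D.specialAtomic ∧ D.noSpecialChain

section Dev

/-! ### Weakening -/

def Deriv.wk : ∀ {Γ Δ s φ}, Deriv Γ Δ s φ → ∀ {Γ' Δ' : Set Formula}, Γ ⊆ Γ' → Δ ⊆ Δ' → Deriv Γ' Δ' s φ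
  | _, _, _, _, .hypP h, _, _, hΓ, _ => .hypP (hΓ h)
  | _, _, _, _, .hypN h, _, _, _, hΔ => .hypN (hΔ h)
  | _, _, _, _, .topP, _, _, _, _ => .topP
  | _, _, _, _, .botN, _, _, _, _ => .botN
  | _, _, _, _, .impI d, _, _, hΓ, hΔ => .impI (d.wk (Set.insert_subset_insert hΓ) hΔ)
  | _, _, _, _, .impE d e, _, _, hΓ, hΔ => .impE (d.wk hΓ hΔ) (e.wk hΓ hΔ)
  | _, _, _, _, .impIN d e, _, _, hΓ, hΔ => .impIN (d.wk hΓ hΔ) (e.wk hΓ hΔ)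
  | _, _, _, _, .impE1N d, _, _, hΓ, hΔ => .impE1N (d.wk hΓ hΔ)
  | _, _, _, _, .impE2N d, _, _, hΓ, hΔ => .impE2N (d.wk hΓ hΔ)
  | _, _, _, _, .andI d e, _, _, hΓ, hΔ => .andI (d.wk hΓ hΔ) (e.wk hΓ hΔ)
  | _, _, _, _, .andE1 d, _, _, hΓ, hΔ => .andE1 (d.wk hΓ hΔ)
  | _, _, _, _, .andE2 d, _, _, hΓ, hΔ => .andE2 (d.wk hΓ hΔ)
  | _, _, _, _, .andI1N d, _, _, hΓ, hΔ => .andI1N (d.wk hΓ hΔ)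
  | _, _, _, _, .andI2N d, _, _, hΓ, hΔ => .andI2N (d.wk hΓ hΔ)
  | _, _, _, _, .andEN d e f, _, _, hΓ, hΔ =>
      .andEN (d.wk hΓ hΔ) (e.wk hΓ (Set.insert_subset_insert hΔ)) (f.wk hΓ (Set.insert_subset_insert hΔ))
  | _, _, _, _, .orI1 d, _, _, hΓ, hΔ => .orI1 (d.wk hΓ hΔ)
  | _, _, _, _, .orI2 d, _, _, hΓ, hΔ => .orI2 (d.wk hΓ hΔ)
  | _, _, _, _, .orE d e f, _, _, hΓ, hΔ =>
      .orE (d.wk hΓ hΔ) (e.wk (Set.insert_subset_insert hΓ) hΔ) (f.wk (Set.insert_subset_insert hΓ) hΔ)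
  | _, _, _, _, .orIN d e, _, _, hΓ, hΔ => .orIN (d.wk hΓ hΔ) (e.wk hΓ hΔ)
  | _, _, _, _, .orE1N d, _, _, hΓ, hΔ => .orE1N (d.wk hΓ hΔ)
  | _, _, _, _, .orE2N d, _, _, hΓ, hΔ => .orE2N (d.wk hΓ hΔ)
  | _, _, _, _, .coimpI d e, _, _, hΓ, hΔ => .coimpI (d.wk hΓ hΔ) (e.wk hΓ hΔ)
  | _, _, _, _, .coimpE1 d, _, _, hΓ, hΔ => .coimpE1 (d.wk hΓ hΔ)
  | _, _, _, _, .coimpE2 d, _, _, hΓ, hΔ => .coimpE2 (d.wk hΓ hΔ)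
  | _, _, _, _, .coimpIN d, _, _, hΓ, hΔ => .coimpIN (d.wk hΓ (Set.insert_subset_insert hΔ))
  | _, _, _, _, .coimpEN d e, _, _, hΓ, hΔ => .coimpEN (d.wk hΓ hΔ) (e.wk hΓ hΔ)
  | _, _, _, _, .botP d, _, _, hΓ, hΔ => .botP (d.wk hΓ hΔ)
  | _, _, _, _, .topN d, _, _, hΓ, hΔ => .topN (d.wk hΓ hΔ)
  | _, _, _, _, .prP d e, _, _, hΓ, hΔ => .prP (d.wk hΓ hΔ) (e.wk hΓ hΔ)
  | _, _, _, _, .prN d e, _, _, hΓ, hΔ => .prN (d.wk hΓ hΔ) (e.wk hΓ hΔ)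

theorem Deriv.wk_endsSpecial {Γ Δ s φ} (D : Deriv Γ Δ s φ) {Γ' Δ' : Set Formula}
    (h1 : Γ ⊆ Γ') (h2 : Δ ⊆ Δ') : (D.wk h1 h2).endsSpecial ↔ D.endsSpecial := by
  cases D <;> exact Iff.rfl

theorem Deriv.wk_specialAtomic : ∀ {Γ Δ s φ} (D : Deriv Γ Δ s φ) {Γ' Δ' : Set Formula}
    (h1 : Γ ⊆ Γ') (h2 : Δ ⊆ Δ'), D.specialAtomic → (D.wk h1 h2).specialAtomic
  | _, _, _, _, .hypP _, _, _, _, _, _ => trivial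
  | _, _, _, _, .hypN _, _, _, _, _, _ => trivial
  | _, _, _, _, .topP, _, _, _, _, _ => trivial
  | _, _, _, _, .botN, _, _, _, _, _ => trivial
  | _, _, _, _, .impI d, _, _, h1, h2, h => d.wk_specialAtomic _ _ h
  | _, _, _, _, .impE d e, _, _, h1, h2, h => ⟨d.wk_specialAtomic _ _ h.1, e.wk_specialAtomic _ _ h.2⟩
  | _, _, _, _, .impIN d e, _, _, h1, h2, h => ⟨d.wk_specialAtomic _ _ h.1, e.wk_specialAtomic _ _ h.2⟩
  | _, _, _, _, .impE1N d, _, _, h1, h2, h => d.wk_specialAtomic _ _ h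
  | _, _, _, _, .impE2N d, _, _, h1, h2, h => d.wk_specialAtomic _ _ h
  | _, _, _, _, .andI d e, _, _, h1, h2, h => ⟨d.wk_specialAtomic _ _ h.1, e.wk_specialAtomic _ _ h.2⟩
  | _, _, _, _, .andE1 d, _, _, h1, h2, h => d.wk_specialAtomic _ _ h
  | _, _, _, _, .andE2 d, _, _, h1, h2, h => d.wk_specialAtomic _ _ h
  | _, _, _, _, .andI1N d, _, _, h1, h2, h => d.wk_specialAtomic _ _ h
  | _, _, _, _, .andI2N d, _, _, h1, h2, h => d.wk_specialAtomic _ _ h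
  | _, _, _, _, .andEN d e f, _, _, h1, h2, h =>
      ⟨d.wk_specialAtomic _ _ h.1, e.wk_specialAtomic _ _ h.2.1, f.wk_specialAtomic _ _ h.2.2⟩
  | _, _, _, _, .orI1 d, _, _, h1, h2, h => d.wk_specialAtomic _ _ h
  | _, _, _, _, .orI2 d, _, _, h1, h2, h => d.wk_specialAtomic _ _ h
  | _, _, _, _, .orE d e f, _, _, h1, h2, h =>
      ⟨d.wk_specialAtomic _ _ h.1, e.wk_specialAtomic _ _ h.2.1, f.wk_specialAtomic _ _ h.2.2⟩
  | _, _, _, _, .orIN d e, _, _, h1, h2, h => ⟨d.wk_specialAtomic _ _ h.1, e.wk_specialAtomic _ _ h.2⟩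
  | _, _, _, _, .orE1N d, _, _, h1, h2, h => d.wk_specialAtomic _ _ h
  | _, _, _, _, .orE2N d, _, _, h1, h2, h => d.wk_specialAtomic _ _ h
  | _, _, _, _, .coimpI d e, _, _, h1, h2, h => ⟨d.wk_specialAtomic _ _ h.1, e.wk_specialAtomic _ _ h.2⟩
  | _, _, _, _, .coimpE1 d, _, _, h1, h2, h => d.wk_specialAtomic _ _ h
  | _, _, _, _, .coimpE2 d, _, _, h1, h2, h => d.wk_specialAtomic _ _ h
  | _, _, _, _, .coimpIN d, _, _, h1, h2, h => d.wk_specialAtomic _ _ h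
  | _, _, _, _, .coimpEN d e, _, _, h1, h2, h => ⟨d.wk_specialAtomic _ _ h.1, e.wk_specialAtomic _ _ h.2⟩
  | _, _, _, _, .botP d, _, _, h1, h2, h => ⟨h.1, d.wk_specialAtomic _ _ h.2⟩
  | _, _, _, _, .topN d, _, _, h1, h2, h => ⟨h.1, d.wk_specialAtomic _ _ h.2⟩
  | _, _, _, _, .prP d e, _, _, h1, h2, h =>
      ⟨h.1, h.2.1, d.wk_specialAtomic _ _ h.2.2.1, e.wk_specialAtomic _ _ h.2.2.2⟩
  | _, _, _, _, .prN d e, _, _, h1, h2, h =>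
      ⟨h.1, h.2.1, d.wk_specialAtomic _ _ h.2.2.1, e.wk_specialAtomic _ _ h.2.2.2⟩

theorem Deriv.wk_noSpecialChain : ∀ {Γ Δ s φ} (D : Deriv Γ Δ s φ) {Γ' Δ' : Set Formula}
    (h1 : Γ ⊆ Γ') (h2 : Δ ⊆ Δ'), D.noSpecialChain → (D.wk h1 h2).noSpecialChain
  | _, _, _, _, .hypP _, _, _, _, _, _ => trivial
  | _, _, _, _, .hypN _, _, _, _, _, _ => trivial
  | _, _, _, _, .topP, _, _, _, _, _ => trivial
  | _, _, _, _, .botN, _, _, _, _, _ => trivial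
  | _, _, _, _, .impI d, _, _, h1, h2, h => d.wk_noSpecialChain _ _ h
  | _, _, _, _, .impE d e, _, _, h1, h2, h => ⟨d.wk_noSpecialChain _ _ h.1, e.wk_noSpecialChain _ _ h.2⟩
  | _, _, _, _, .impIN d e, _, _, h1, h2, h => ⟨d.wk_noSpecialChain _ _ h.1, e.wk_noSpecialChain _ _ h.2⟩
  | _, _, _, _, .impE1N d, _, _, h1, h2, h => d.wk_noSpecialChain _ _ h
  | _, _, _, _, .impE2N d, _, _, h1, h2, h => d.wk_noSpecialChain _ _ h
  | _, _, _, _, .andI d e, _, _, h1, h2, h => ⟨d.wk_noSpecialChain _ _ h.1, e.wk_noSpecialChain _ _ h.2⟩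
  | _, _, _, _, .andE1 d, _, _, h1, h2, h => d.wk_noSpecialChain _ _ h
  | _, _, _, _, .andE2 d, _, _, h1, h2, h => d.wk_noSpecialChain _ _ h
  | _, _, _, _, .andI1N d, _, _, h1, h2, h => d.wk_noSpecialChain _ _ h
  | _, _, _, _, .andI2N d, _, _, h1, h2, h => d.wk_noSpecialChain _ _ h
  | _, _, _, _, .andEN d e f, _, _, h1, h2, h =>
      ⟨d.wk_noSpecialChain _ _ h.1, e.wk_noSpecialChain _ _ h.2.1, f.wk_noSpecialChain _ _ h.2.2⟩
  | _, _, _, _, .orI1 d, _, _, h1, h2, h => d.wk_noSpecialChain _ _ h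
  | _, _, _, _, .orI2 d, _, _, h1, h2, h => d.wk_noSpecialChain _ _ h
  | _, _, _, _, .orE d e f, _, _, h1, h2, h =>
      ⟨d.wk_noSpecialChain _ _ h.1, e.wk_noSpecialChain _ _ h.2.1, f.wk_noSpecialChain _ _ h.2.2⟩
  | _, _, _, _, .orIN d e, _, _, h1, h2, h => ⟨d.wk_noSpecialChain _ _ h.1, e.wk_noSpecialChain _ _ h.2⟩
  | _, _, _, _, .orE1N d, _, _, h1, h2, h => d.wk_noSpecialChain _ _ h
  | _, _, _, _, .orE2N d, _, _, h1, h2, h => d.wk_noSpecialChain _ _ h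
  | _, _, _, _, .coimpI d e, _, _, h1, h2, h => ⟨d.wk_noSpecialChain _ _ h.1, e.wk_noSpecialChain _ _ h.2⟩
  | _, _, _, _, .coimpE1 d, _, _, h1, h2, h => d.wk_noSpecialChain _ _ h
  | _, _, _, _, .coimpE2 d, _, _, h1, h2, h => d.wk_noSpecialChain _ _ h
  | _, _, _, _, .coimpIN d, _, _, h1, h2, h => d.wk_noSpecialChain _ _ h
  | _, _, _, _, .coimpEN d e, _, _, h1, h2, h => ⟨d.wk_noSpecialChain _ _ h.1, e.wk_noSpecialChain _ _ h.2⟩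
  | _, _, _, _, .botP d, _, _, h1, h2, hh =>
      ⟨fun h => hh.1 ((d.wk_endsSpecial h1 h2).1 h), d.wk_noSpecialChain _ _ hh.2⟩
  | _, _, _, _, .topN d, _, _, h1, h2, hh =>
      ⟨fun h => hh.1 ((d.wk_endsSpecial h1 h2).1 h), d.wk_noSpecialChain _ _ hh.2⟩
  | _, _, _, _, .prP d e, _, _, h1, h2, hh =>
      ⟨fun h => hh.1 ((d.wk_endsSpecial h1 h2).1 h), fun h => hh.2.1 ((e.wk_endsSpecial h1 h2).1 h),
       d.wk_noSpecialChain _ _ hh.2.2.1, e.wk_noSpecialChain _ _ hh.2.2.2⟩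
  | _, _, _, _, .prN d e, _, _, h1, h2, hh =>
      ⟨fun h => hh.1 ((d.wk_endsSpecial h1 h2).1 h), fun h => hh.2.1 ((e.wk_endsSpecial h1 h2).1 h),
       d.wk_noSpecialChain _ _ hh.2.2.1, e.wk_noSpecialChain _ _ hh.2.2.2⟩

theorem Deriv.wk_preNormal {Γ Δ s φ} (D : Deriv Γ Δ s φ) {Γ' Δ' : Set Formula}
    (h1 : Γ ⊆ Γ') (h2 : Δ ⊆ Δ') (h : D.preNormal) : (D.wk h1 h2).preNormal :=
  ⟨D.wk_specialAtomic h1 h2 h.1, D.wk_noSpecialChain h1 h2 h.2⟩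

end Dev

/-! ### Atomic explosion sources -/

/-- `(Γ;Δ)` admits pre-normal derivations of every atomic formula on both sides,
stably under weakening. -/
def ExplodesA (Γ Δ : Set Formula) : Prop :=
  ∀ ⦃Γ' Δ' : Set Formula⦄, Γ ⊆ Γ' → Δ ⊆ Δ' → ∀ ψ : Formula, ψ.isAtomic → ∀ s : Side,
    ∃ D : Deriv Γ' Δ' s ψ, D.preNormal

theorem exBot {Γ Δ : Set Formula} (d : Deriv Γ Δ .pos Formula.bot)
    (hns : ¬ d.endsSpecial) (h : d.preNormal) : ExplodesA Γ Δ := by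
  intro Γ' Δ' h1 h2 ψ hψ s
  exact ⟨.botP (d.wk h1 h2), ⟨hψ, d.wk_specialAtomic h1 h2 h.1⟩,
    fun hc => hns ((d.wk_endsSpecial h1 h2).1 hc), d.wk_noSpecialChain h1 h2 h.2⟩

theorem exTop {Γ Δ : Set Formula} (d : Deriv Γ Δ .neg Formula.top)
    (hns : ¬ d.endsSpecial) (h : d.preNormal) : ExplodesA Γ Δ := by
  intro Γ' Δ' h1 h2 ψ hψ s
  exact ⟨.topN (d.wk h1 h2), ⟨hψ, d.wk_specialAtomic h1 h2 h.1⟩,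
    fun hc => hns ((d.wk_endsSpecial h1 h2).1 hc), d.wk_noSpecialChain h1 h2 h.2⟩

theorem exPr {Γ Δ : Set Formula} {χ : Formula} (hχ : χ.isAtomic)
    (d : Deriv Γ Δ .pos χ) (e : Deriv Γ Δ .neg χ)
    (hnd : ¬ d.endsSpecial) (hne : ¬ e.endsSpecial)
    (hd : d.preNormal) (he : e.preNormal) : ExplodesA Γ Δ := by
  intro Γ' Δ' h1 h2 ψ hψ s
  cases s with
  | pos =>
    exact ⟨.prP (d.wk h1 h2) (e.wk h1 h2),
      ⟨hχ, hψ, d.wk_specialAtomic h1 h2 hd.1, e.wk_specialAtomic h1 h2 he.1⟩,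
      fun hc => hnd ((d.wk_endsSpecial h1 h2).1 hc),
      fun hc => hne ((e.wk_endsSpecial h1 h2).1 hc),
      d.wk_noSpecialChain h1 h2 hd.2, e.wk_noSpecialChain h1 h2 he.2⟩
  | neg =>
    exact ⟨.prN (d.wk h1 h2) (e.wk h1 h2),
      ⟨hχ, hψ, d.wk_specialAtomic h1 h2 hd.1, e.wk_specialAtomic h1 h2 he.1⟩,
      fun hc => hnd ((d.wk_endsSpecial h1 h2).1 hc),
      fun hc => hne ((e.wk_endsSpecial h1 h2).1 hc),
      d.wk_noSpecialChain h1 h2 hd.2, e.wk_noSpecialChain h1 h2 he.2⟩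

/-- Peeling off a final special rule from a pre-normal deduction yields an
explosion source. -/
theorem peel {Γ Δ : Set Formula} {s : Side} {φ : Formula} (D : Deriv Γ Δ s φ)
    (hD : D.preNormal) (hs : D.endsSpecial) : ExplodesA Γ Δ := by
  obtain ⟨hA, hC⟩ := hD
  cases D with
  | botP d => exact exBot d hC.1 ⟨hA.2, hC.2⟩
  | topN d => exact exTop d hC.1 ⟨hA.2, hC.2⟩
  | prP d e => exact exPr hA.1 d e hC.1 hC.2.1 ⟨hA.2.2.1, hC.2.2.1⟩ ⟨hA.2.2.2, hC.2.2.2⟩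
  | prN d e => exact exPr hA.1 d e hC.1 hC.2.1 ⟨hA.2.2.1, hC.2.2.1⟩ ⟨hA.2.2.2, hC.2.2.2⟩
  | _ => exact absurd hs (fun h => h)

theorem ExplodesA.mono {Γ Δ Γ' Δ' : Set Formula} (E : ExplodesA Γ Δ)
    (h1 : Γ ⊆ Γ') (h2 : Δ ⊆ Δ') : ExplodesA Γ' Δ' :=
  fun _ _ g1 g2 => E (h1.trans g1) (h2.trans g2)

/-- Explosion: from an atomic explosion source, every formula has a pre-normal
derivation on both sides. -/
theorem explode : ∀ (φ : Formula) {Γ Δ : Set Formula}, ExplodesA Γ Δ → ∀ s : Side,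
    ∃ D : Deriv Γ Δ s φ, D.preNormal := by
  intro φ
  induction φ with
  | atom a => intro Γ Δ E s; exact E subset_rfl subset_rfl (.atom a) (by trivial) s
  | conj φ ψ ihφ ihψ =>
    intro Γ Δ E s
    cases s with
    | pos =>
      obtain ⟨d, hd⟩ := ihφ E .pos
      obtain ⟨e, he⟩ := ihψ E .pos
      exact ⟨.andI d e, ⟨hd.1, he.1⟩, hd.2, he.2⟩
    | neg =>
      obtain ⟨d, hd⟩ := ihφ E .neg
      exact ⟨.andI1N d, hd.1, hd.2⟩
  | disj φ ψ ihφ ihψ =>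
    intro Γ Δ E s
    cases s with
    | pos =>
      obtain ⟨d, hd⟩ := ihφ E .pos
      exact ⟨.orI1 d, hd.1, hd.2⟩
    | neg =>
      obtain ⟨d, hd⟩ := ihφ E .neg
      obtain ⟨e, he⟩ := ihψ E .neg
      exact ⟨.orIN d e, ⟨hd.1, he.1⟩, hd.2, he.2⟩
  | impl φ ψ ihφ ihψ =>
    intro Γ Δ E s
    cases s with
    | pos =>
      obtain ⟨d, hd⟩ := ihψ (E.mono (Set.subset_insert φ Γ) subset_rfl) .pos
      exact ⟨.impI d, hd.1, hd.2⟩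
    | neg =>
      obtain ⟨d, hd⟩ := ihφ E .pos
      obtain ⟨e, he⟩ := ihψ E .neg
      exact ⟨.impIN d e, ⟨hd.1, he.1⟩, hd.2, he.2⟩
  | coimpl φ ψ ihφ ihψ =>
    intro Γ Δ E s
    cases s with
    | pos =>
      obtain ⟨d, hd⟩ := ihφ E .pos
      obtain ⟨e, he⟩ := ihψ E .neg
      exact ⟨.coimpI d e, ⟨hd.1, he.1⟩, hd.2, he.2⟩
    | neg =>
      obtain ⟨d, hd⟩ := ihφ (E.mono subset_rfl (Set.subset_insert ψ Δ)) .neg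
      exact ⟨.coimpIN d, hd.1, hd.2⟩

/-- A pre-normal clash (proof and refutation of the same formula) yields an
atomic explosion source. -/
theorem clashExpl : ∀ (χ : Formula) {Γ Δ : Set Formula}
    (D1 : Deriv Γ Δ .pos χ) (D2 : Deriv Γ Δ .neg χ),
    D1.preNormal → D2.preNormal → ExplodesA Γ Δ := by
  intro χ
  induction χ with
  | atom a =>
    intro Γ Δ D1 D2 h1 h2
    by_cases e1 : D1.endsSpecial
    · exact peel D1 h1 e1
    by_cases e2 : D2.endsSpecial
    · exact peel D2 h2 e2
    exact exPr (χ := .atom a) (by trivial) D1 D2 e1 e2 h1 h2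
  | conj φ ψ ihφ ihψ =>
    intro Γ Δ D1 D2 h1 h2
    intro Γ' Δ' hΓ hΔ ψt hψt s
    have E1 : ExplodesA Γ' (insert φ Δ') :=
      ihφ (.andE1 (D1.wk hΓ (hΔ.trans (Set.subset_insert φ Δ'))))
        (.hypN (Set.mem_insert φ Δ'))
        ⟨D1.wk_specialAtomic _ _ h1.1, D1.wk_noSpecialChain _ _ h1.2⟩ ⟨trivial, trivial⟩
    have E2 : ExplodesA Γ' (insert ψ Δ') :=
      ihψ (.andE2 (D1.wk hΓ (hΔ.trans (Set.subset_insert ψ Δ'))))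
        (.hypN (Set.mem_insert ψ Δ'))
        ⟨D1.wk_specialAtomic _ _ h1.1, D1.wk_noSpecialChain _ _ h1.2⟩ ⟨trivial, trivial⟩
    obtain ⟨B1, hB1⟩ := E1 subset_rfl subset_rfl ψt hψt s
    obtain ⟨B2, hB2⟩ := E2 subset_rfl subset_rfl ψt hψt s
    exact ⟨.andEN (D2.wk hΓ hΔ) B1 B2,
      ⟨D2.wk_specialAtomic _ _ h2.1, hB1.1, hB2.1⟩,
      D2.wk_noSpecialChain _ _ h2.2, hB1.2, hB2.2⟩
  | disj φ ψ ihφ ihψ =>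
    intro Γ Δ D1 D2 h1 h2
    intro Γ' Δ' hΓ hΔ ψt hψt s
    have E1 : ExplodesA (insert φ Γ') Δ' :=
      ihφ (.hypP (Set.mem_insert φ Γ'))
        (.orE1N (D2.wk (hΓ.trans (Set.subset_insert φ Γ')) hΔ))
        ⟨trivial, trivial⟩ ⟨D2.wk_specialAtomic _ _ h2.1, D2.wk_noSpecialChain _ _ h2.2⟩
    have E2 : ExplodesA (insert ψ Γ') Δ' :=
      ihψ (.hypP (Set.mem_insert ψ Γ'))
        (.orE2N (D2.wk (hΓ.trans (Set.subset_insert ψ Γ')) hΔ))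
        ⟨trivial, trivial⟩ ⟨D2.wk_specialAtomic _ _ h2.1, D2.wk_noSpecialChain _ _ h2.2⟩
    obtain ⟨B1, hB1⟩ := E1 subset_rfl subset_rfl ψt hψt s
    obtain ⟨B2, hB2⟩ := E2 subset_rfl subset_rfl ψt hψt s
    exact ⟨.orE (D1.wk hΓ hΔ) B1 B2,
      ⟨D1.wk_specialAtomic _ _ h1.1, hB1.1, hB2.1⟩,
      D1.wk_noSpecialChain _ _ h1.2, hB1.2, hB2.2⟩
  | impl φ ψ ihφ ihψ =>
    intro Γ Δ D1 D2 h1 h2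
    exact ihψ (.impE D1 (.impE1N D2)) (.impE2N D2)
      ⟨⟨h1.1, h2.1⟩, h1.2, h2.2⟩ ⟨h2.1, h2.2⟩
  | coimpl φ ψ ihφ ihψ =>
    intro Γ Δ D1 D2 h1 h2
    exact ihφ (.coimpE1 D1) (.coimpEN D2 (.coimpE2 D1))
      ⟨h1.1, h1.2⟩ ⟨⟨h2.1, h1.1⟩, h2.2, h1.2⟩

/-- Every deduction in `BPR` with premises `(Γ;Δ)` and conclusion `φ`
can be reduced to a deduction in pre-normal form with the same premises and the same
conclusion. -/
theorem prenormal_form (Γ Δ : Set Formula) (s : Side) (φ : Formula)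
    (D : Deriv Γ Δ s φ) :
    ∃ D' : Deriv Γ Δ s φ, D'.preNormal := by
  induction D with
  | hypP h => exact ⟨.hypP h, trivial, trivial⟩
  | hypN h => exact ⟨.hypN h, trivial, trivial⟩
  | topP => exact ⟨.topP, trivial, trivial⟩
  | botN => exact ⟨.botN, trivial, trivial⟩
  | impI d ih =>
    obtain ⟨d', hd⟩ := ih
    exact ⟨.impI d', hd.1, hd.2⟩
  | impE d e ihd ihe =>
    obtain ⟨d', hd⟩ := ihd; obtain ⟨e', he⟩ := ihe
    exact ⟨.impE d' e', ⟨hd.1, he.1⟩, hd.2, he.2⟩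
  | impIN d e ihd ihe =>
    obtain ⟨d', hd⟩ := ihd; obtain ⟨e', he⟩ := ihe
    exact ⟨.impIN d' e', ⟨hd.1, he.1⟩, hd.2, he.2⟩
  | impE1N d ih =>
    obtain ⟨d', hd⟩ := ih
    exact ⟨.impE1N d', hd.1, hd.2⟩
  | impE2N d ih =>
    obtain ⟨d', hd⟩ := ih
    exact ⟨.impE2N d', hd.1, hd.2⟩
  | andI d e ihd ihe =>
    obtain ⟨d', hd⟩ := ihd; obtain ⟨e', he⟩ := ihe
    exact ⟨.andI d' e', ⟨hd.1, he.1⟩, hd.2, he.2⟩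
  | andE1 d ih =>
    obtain ⟨d', hd⟩ := ih
    exact ⟨.andE1 d', hd.1, hd.2⟩
  | andE2 d ih =>
    obtain ⟨d', hd⟩ := ih
    exact ⟨.andE2 d', hd.1, hd.2⟩
  | andI1N d ih =>
    obtain ⟨d', hd⟩ := ih
    exact ⟨.andI1N d', hd.1, hd.2⟩
  | andI2N d ih =>
    obtain ⟨d', hd⟩ := ih
    exact ⟨.andI2N d', hd.1, hd.2⟩
  | andEN d e f ihd ihe ihf =>
    obtain ⟨d', hd⟩ := ihd; obtain ⟨e', he⟩ := ihe; obtain ⟨f', hf⟩ := ihf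
    exact ⟨.andEN d' e' f', ⟨hd.1, he.1, hf.1⟩, hd.2, he.2, hf.2⟩
  | orI1 d ih =>
    obtain ⟨d', hd⟩ := ih
    exact ⟨.orI1 d', hd.1, hd.2⟩
  | orI2 d ih =>
    obtain ⟨d', hd⟩ := ih
    exact ⟨.orI2 d', hd.1, hd.2⟩
  | orE d e f ihd ihe ihf =>
    obtain ⟨d', hd⟩ := ihd; obtain ⟨e', he⟩ := ihe; obtain ⟨f', hf⟩ := ihf
    exact ⟨.orE d' e' f', ⟨hd.1, he.1, hf.1⟩, hd.2, he.2, hf.2⟩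
  | orIN d e ihd ihe =>
    obtain ⟨d', hd⟩ := ihd; obtain ⟨e', he⟩ := ihe
    exact ⟨.orIN d' e', ⟨hd.1, he.1⟩, hd.2, he.2⟩
  | orE1N d ih =>
    obtain ⟨d', hd⟩ := ih
    exact ⟨.orE1N d', hd.1, hd.2⟩
  | orE2N d ih =>
    obtain ⟨d', hd⟩ := ih
    exact ⟨.orE2N d', hd.1, hd.2⟩
  | coimpI d e ihd ihe =>
    obtain ⟨d', hd⟩ := ihd; obtain ⟨e', he⟩ := ihe
    exact ⟨.coimpI d' e', ⟨hd.1, he.1⟩, hd.2, he.2⟩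
  | coimpE1 d ih =>
    obtain ⟨d', hd⟩ := ih
    exact ⟨.coimpE1 d', hd.1, hd.2⟩
  | coimpE2 d ih =>
    obtain ⟨d', hd⟩ := ih
    exact ⟨.coimpE2 d', hd.1, hd.2⟩
  | coimpIN d ih =>
    obtain ⟨d', hd⟩ := ih
    exact ⟨.coimpIN d', hd.1, hd.2⟩
  | coimpEN d e ihd ihe =>
    obtain ⟨d', hd⟩ := ihd; obtain ⟨e', he⟩ := ihe
    exact ⟨.coimpEN d' e', ⟨hd.1, he.1⟩, hd.2, he.2⟩
  | botP d ih =>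
    obtain ⟨d', hd⟩ := ih
    by_cases hs : d'.endsSpecial
    · exact explode _ (peel d' hd hs) _
    · exact explode _ (exBot d' hs hd) _
  | topN d ih =>
    obtain ⟨d', hd⟩ := ih
    by_cases hs : d'.endsSpecial
    · exact explode _ (peel d' hd hs) _
    · exact explode _ (exTop d' hs hd) _
  | prP d e ihd ihe =>
    obtain ⟨d', hd⟩ := ihd; obtain ⟨e', he⟩ := ihe
    exact explode _ (clashExpl _ d' e' hd he) _
  | prN d e ihd ihe =>
    obtain ⟨d', hd⟩ := ihd; obtain ⟨e', he⟩ := ihe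
    exact explode _ (clashExpl _ d' e' hd he) _
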